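/- Let ε > 0 and let ξ_ε = (w_1,…,w_N) ∈ Ξ with X_1 = {i : w_i = 0}, X_3 = {i : w_i = 1/n}, X_2 = {i : 0 < w_i < 1/n}. Assume that either (b) X_2 = ∅ and max_{i ∈ X_3} F_Φ(ξ_ε; i) ≤ min_{i ∈ X_1} F_Φ(ξ_ε; i) + ε, or (c) X_2 ≠ ∅ and there is a real number s such that s − ε/2 < F_Φ(ξ_ε; i) < s + ε/2 for every i ∈ X_2, max_{i ∈ X_3} F_Φ(ξ_ε; i) ≤ s + ε/2, and s − ε/2 ≤ min_{i ∈ X_1} F_Φ(ξ_ε; i). Then for every ξ ∈ Ξ, F_Φ(ξ_ε, ξ) ≥ −ε. -/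

import Mathlib

/-!
Since `F(ξε, ξε) = 0`, linearity gives `F(ξε, ξ) = ∑ (ξ i - ξε i) (f i - s)` for every `s`, where
`f i = F(ξε; i)`. Both (b) and (c) provide an `s` with `f i ≥ s - ε/2` wherever `ξε i < 1/n` and
`f i ≤ s + ε/2` wherever `ξε i > 0`; each summand is then at least `-(ε/2) (ξ i + ξε i)`, and these
bounds add up to `-ε`.
-/

open Filter Topology

lemma eq_zero_of_tendsto_slope_self {E : Type*} [AddCommGroup E] [Module ℝ E] {Φ : E → ℝ} {ξ : E}
    {L : ℝ} (h : Tendsto (fun α : ℝ => (Φ ((1 - α) • ξ + α • ξ) - Φ ξ) / α) (𝓝[>] 0) (𝓝 L)) :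
    L = 0 := by
  have hzero : (fun α : ℝ => (Φ ((1 - α) • ξ + α • ξ) - Φ ξ) / α) = fun _ => 0 := by
    funext α
    rw [← add_smul, sub_add_cancel, one_smul, sub_self, zero_div]
  exact tendsto_nhds_unique h (hzero ▸ tendsto_const_nhds)

lemma exists_forall_le_and_le_forall {ι α : Type*} [LinearOrder α] [Nonempty α] {A B : Set ι}
    (hA : A.Finite) (hB : B.Finite) {g h : ι → α} (hgh : ∀ u ∈ A, ∀ l ∈ B, g u ≤ h l) :
    ∃ s, (∀ u ∈ A, g u ≤ s) ∧ ∀ l ∈ B, s ≤ h l := by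
  rcases A.eq_empty_or_nonempty with rfl | hAne
  · rcases B.eq_empty_or_nonempty with rfl | hBne
    · exact ⟨Classical.arbitrary α, by simp, by simp⟩
    · obtain ⟨l, -, hmin⟩ := Set.exists_min_image B h hB hBne
      exact ⟨h l, by simp, hmin⟩
  · obtain ⟨u, hu, hmax⟩ := Set.exists_max_image A g hA hAne
    exact ⟨g u, hmax, hgh u hu⟩

lemma neg_mul_add_le_sub_mul_sub {b δ s w x f : ℝ} (hδ : 0 ≤ δ) (hw : 0 ≤ w) (hx : 0 ≤ x)
    (hxb : x ≤ b) (hlow : w < b → s - δ ≤ f) (hup : 0 < w → f ≤ s + δ) :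
    -δ * (x + w) ≤ (x - w) * (f - s) := by
  by_cases hwb : w < b
  · have hf := hlow hwb
    rcases hw.eq_or_lt with rfl | hpos
    · nlinarith [mul_nonneg hx (by linarith : 0 ≤ f - s + δ)]
    · have hf' := hup hpos
      nlinarith [mul_nonneg hx (by linarith : 0 ≤ f - s + δ),
        mul_nonneg hw (by linarith : 0 ≤ s + δ - f)]
  · have hxw : x ≤ w := hxb.trans (not_lt.mp hwb)
    rcases hw.eq_or_lt with rfl | hpos
    · obtain rfl : x = 0 := le_antisymm hxw hx
      simp
    · have hf := hup hpos
      nlinarith [mul_nonneg (by linarith : 0 ≤ w - x) (by linarith : 0 ≤ s + δ - f),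
        mul_nonneg hδ hx]

lemma sum_sub_mul_sub_eq {ι : Type*} [Fintype ι] {w x f : ι → ℝ} (s : ℝ)
    (hsum : ∑ i, x i = ∑ i, w i) :
    ∑ i, (x i - w i) * (f i - s) = ∑ i, x i * f i - ∑ i, w i * f i := by
  have hexpand : ∀ i, (x i - w i) * (f i - s) = x i * f i - w i * f i - s * (x i - w i) :=
    fun i => by ring
  simp only [hexpand, Finset.sum_sub_distrib, ← Finset.mul_sum, hsum, sub_self, mul_zero,
    sub_zero]

lemma exists_bounds_of_forall_notMem_Ioo {ι : Type*} [Finite ι] {b ε : ℝ} {w f : ι → ℝ}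
    (hw0 : ∀ i, 0 ≤ w i) (hwb : ∀ i, w i ≤ b) (hint : ∀ i, w i ∉ Set.Ioo 0 b)
    (hsep : ∀ u, w u = b → ∀ l, w l = 0 → f u ≤ f l + ε) :
    ∃ s, (∀ i, w i < b → s - ε / 2 ≤ f i) ∧ ∀ i, 0 < w i → f i ≤ s + ε / 2 := by
  obtain ⟨t, htop, hbot⟩ := exists_forall_le_and_le_forall (A := {i | w i = b})
    (B := {i | w i = 0}) (Set.toFinite _) (Set.toFinite _) hsep
  refine ⟨t - ε / 2, fun i hi => ?_, fun i hi => ?_⟩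
  · have hi0 : w i = 0 := ((hw0 i).eq_or_lt.resolve_right fun h => hint i ⟨h, hi⟩).symm
    linarith [hbot i hi0]
  · have hib : w i = b := (hwb i).lt_or_eq.resolve_left fun h => hint i ⟨hi, h⟩
    linarith [htop i hib]

lemma neg_mul_add_le_sum_mul_sub_sum_mul {ι : Type*} [Fintype ι] {b δ s : ℝ} {w x f : ι → ℝ}
    (hδ : 0 ≤ δ) (hw : ∀ i, 0 ≤ w i) (hx : ∀ i, 0 ≤ x i) (hxb : ∀ i, x i ≤ b)
    (hsum : ∑ i, x i = ∑ i, w i) (hlow : ∀ i, w i < b → s - δ ≤ f i)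
    (hup : ∀ i, 0 < w i → f i ≤ s + δ) :
    -δ * (∑ i, x i + ∑ i, w i) ≤ ∑ i, x i * f i - ∑ i, w i * f i := by
  rw [← sum_sub_mul_sub_eq s hsum, ← Finset.sum_add_distrib, Finset.mul_sum]
  exact Finset.sum_le_sum fun i _ =>
    neg_mul_add_le_sub_mul_sub hδ (hw i) (hx i) (hxb i) (hlow i) (hup i)

theorem stmt_14_general
    (N : ℕ)
    (Δ : Set (Fin N → ℝ))
    (hΔ : Δ = {w : Fin N → ℝ | (∀ i, 0 ≤ w i) ∧ ∑ i, w i = 1})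
    (Φ : (Fin N → ℝ) → ℝ)
    (F : (Fin N → ℝ) → (Fin N → ℝ) → ℝ)
    (hF : ∀ ξ ∈ Δ, ∀ η ∈ Δ,
      Filter.Tendsto (fun α : ℝ => (Φ ((1 - α) • ξ + α • η) - Φ ξ) / α)
        (nhdsWithin 0 (Set.Ioi 0)) (nhds (F ξ η)))
    (hlin : ∀ ξ ∈ Δ, ∀ η ∈ Δ, F ξ η = ∑ i, η i * F ξ (Pi.single i 1))
    (n : ℕ)
    (Ξ : Set (Fin N → ℝ))
    (hΞ : Ξ = {w : Fin N → ℝ | w ∈ Δ ∧ ∀ i, w i ≤ 1 / (n : ℝ)})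
    (ε : ℝ) (hε : 0 < ε)
    (ξε : Fin N → ℝ) (hmem : ξε ∈ Ξ)
    (X1 X2 X3 : Set (Fin N))
    (hX1 : X1 = {i | ξε i = 0})
    (hX2 : X2 = {i | 0 < ξε i ∧ ξε i < 1 / (n : ℝ)})
    (hX3 : X3 = {i | ξε i = 1 / (n : ℝ)})
    (hcond :
      (X2 = ∅ ∧ ∀ u ∈ X3, ∀ l ∈ X1,
        F ξε (Pi.single u 1) ≤ F ξε (Pi.single l 1) + ε) ∨
      (X2.Nonempty ∧ ∃ s : ℝ,
        (∀ i ∈ X2, s - ε / 2 < F ξε (Pi.single i 1) ∧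
          F ξε (Pi.single i 1) < s + ε / 2) ∧
        (∀ u ∈ X3, F ξε (Pi.single u 1) ≤ s + ε / 2) ∧
        (∀ l ∈ X1, s - ε / 2 ≤ F ξε (Pi.single l 1)))) :
    ∀ ξ ∈ Ξ, F ξε ξ ≥ -ε := by
  subst hΔ hΞ hX1 hX2 hX3
  rintro ξ ⟨hξΔ, hξb⟩
  obtain ⟨⟨hw0, hw1⟩, hwb⟩ := hmem
  have hself : ∑ i, ξε i * F ξε (Pi.single i 1) = 0 := by
    rw [← hlin ξε ⟨hw0, hw1⟩ ξε ⟨hw0, hw1⟩]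
    exact eq_zero_of_tendsto_slope_self (hF ξε ⟨hw0, hw1⟩ ξε ⟨hw0, hw1⟩)
  obtain ⟨s, hlow, hup⟩ : ∃ s, (∀ i, ξε i < 1 / n → s - ε / 2 ≤ F ξε (Pi.single i 1)) ∧
      ∀ i, 0 < ξε i → F ξε (Pi.single i 1) ≤ s + ε / 2 := by
    rcases hcond with ⟨hX2, hb⟩ | ⟨-, s, h2, h3, h1⟩
    · exact exists_bounds_of_forall_notMem_Ioo hw0 hwb
        (fun i hi => Set.eq_empty_iff_forall_notMem.mp hX2 i hi) hb
    · refine ⟨s, fun i hi => ?_, fun i hi => ?_⟩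
      · rcases (hw0 i).eq_or_lt with h | h
        exacts [h1 i h.symm, (h2 i ⟨h, hi⟩).1.le]
      · rcases (hwb i).lt_or_eq with h | h
        exacts [(h2 i ⟨hi, h⟩).2.le, h3 i h]
  have hbound := neg_mul_add_le_sum_mul_sub_sum_mul (half_pos hε).le hw0 hξΔ.1 hξb
    (hξΔ.2.trans hw1.symm) hlow hup
  rw [hξΔ.2, hw1, hself] at hbound
  rw [ge_iff_le, hlin ξε ⟨hw0, hw1⟩ ξ hξΔ]
  linarith

theorem stmt_14
    (N : ℕ) (hN : 1 ≤ N)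
    (Δ : Set (Fin N → ℝ))
    (hΔ : Δ = {w : Fin N → ℝ | (∀ i, 0 ≤ w i) ∧ ∑ i, w i = 1})
    (Φ : (Fin N → ℝ) → ℝ)
    (hconv : ConvexOn ℝ Δ Φ)
    (F : (Fin N → ℝ) → (Fin N → ℝ) → ℝ)
    (hF : ∀ ξ ∈ Δ, ∀ η ∈ Δ,
      Filter.Tendsto (fun α : ℝ => (Φ ((1 - α) • ξ + α • η) - Φ ξ) / α)
        (nhdsWithin 0 (Set.Ioi 0)) (nhds (F ξ η)))
    (hlin : ∀ ξ ∈ Δ, ∀ η ∈ Δ, F ξ η = ∑ i, η i * F ξ (Pi.single i 1))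
    (n : ℕ) (hn1 : 1 ≤ n) (hnN : n ≤ N)
    (Ξ : Set (Fin N → ℝ))
    (hΞ : Ξ = {w : Fin N → ℝ | w ∈ Δ ∧ ∀ i, w i ≤ 1 / (n : ℝ)})
    (ε : ℝ) (hε : 0 < ε)
    (ξε : Fin N → ℝ) (hmem : ξε ∈ Ξ)
    (X1 X2 X3 : Set (Fin N))
    (hX1 : X1 = {i | ξε i = 0})
    (hX2 : X2 = {i | 0 < ξε i ∧ ξε i < 1 / (n : ℝ)})
    (hX3 : X3 = {i | ξε i = 1 / (n : ℝ)})
    (hcond :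
      (X2 = ∅ ∧ ∀ u ∈ X3, ∀ l ∈ X1,
        F ξε (Pi.single u 1) ≤ F ξε (Pi.single l 1) + ε) ∨
      (X2.Nonempty ∧ ∃ s : ℝ,
        (∀ i ∈ X2, s - ε / 2 < F ξε (Pi.single i 1) ∧
          F ξε (Pi.single i 1) < s + ε / 2) ∧
        (∀ u ∈ X3, F ξε (Pi.single u 1) ≤ s + ε / 2) ∧
        (∀ l ∈ X1, s - ε / 2 ≤ F ξε (Pi.single l 1)))) :
    ∀ ξ ∈ Ξ, F ξε ξ ≥ -ε :=
  stmt_14_general N Δ hΔ Φ F hF hlin n Ξ hΞ ε hε ξε hmem X1 X2 X3 hX1 hX2 hX3 hcond
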